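/- arXiv:2503.06426 — 2 statements merged into one kernel-verified Lean document; each statement's English description precedes it below -/
import Mathlib

section
/- (One-step local drift bound, Eq. (23) of the paper.) Let E be a finite-dimensional real inner product space, let f_1, …, f_N : E → ℝ be differentiable with L-Lipschitz gradients, and let f = (1/N)Σ_{i=1}^N f_i satisfy ‖∇f_i(w) − ∇f(w)‖² ≤ σ_g² for all i and all w ∈ E. Fix an anchor point w_t ∈ E, an integer K ≥ 2, and a step size ζ > 0 with 1/(2K−1) + 6Kζ²L² ≤ 1/(K−1). On a probability space, let w be a square-integrable E-valued random vector (the current local iterate of client i) and let g be a square-integrable E-valued random vector (the stochastic gradient) such that, conditionally on the σ-algebra generated by w, E[g | w] = ∇f_i(w) and E[‖g − ∇f_i(w)‖² | w] ≤ σ_l². Then the next iterate w⁺ = w − ζ g satisfies E‖w⁺ − w_t‖² ≤ (1 + 1/(K−1)) E‖w − w_t‖² + ζ²σ_l² + 6Kζ²σ_g² + 6Kζ²‖∇f(w_t)‖². -/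
/-!
Write `w⁺ - w_t = X - ζ D` with `X = (w - w_t) - ζ ∇f_i(w)`, which is `σ(w)`-measurable, and
`D = g - ∇f_i(w)`, which has conditional mean zero given `σ(w)`. By the pull-out property the cross
term `E⟪X, D⟫` vanishes, so `E‖w⁺ - w_t‖² = E‖X‖² + ζ² E‖D‖²`, and `E‖D‖² ≤ σ_l²`. The first term
is bounded pointwise by Young's inequality `‖a - b‖² ≤ (1 + 1/(2K-1)) ‖a‖² + 2K ‖b‖²` and
`‖∇f_i(w)‖² ≤ 3L² ‖w - w_t‖² + 3σ_g² + 3‖∇f(w_t)‖²`; the step-size condition absorbs the resulting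
`6Kζ²L²` into the coefficient `1 + 1/(K-1)`.
-/

open MeasureTheory
open scoped Gradient RealInnerProductSpace

section NormInequalities

variable {E : Type*} [SeminormedAddCommGroup E]

theorem norm_sub_sq_le_one_add_mul {ε : ℝ} (hε : 0 < ε) (x y : E) :
    ‖x - y‖ ^ 2 ≤ (1 + ε) * ‖x‖ ^ 2 + (1 + ε⁻¹) * ‖y‖ ^ 2 := by
  have h := norm_sub_le x y
  have hsq : ‖x - y‖ ^ 2 ≤ (‖x‖ + ‖y‖) ^ 2 := by gcongr
  have hyoung : 2 * ‖x‖ * ‖y‖ ≤ ε * ‖x‖ ^ 2 + ε⁻¹ * ‖y‖ ^ 2 := by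
    have := sq_nonneg (ε * ‖x‖ - ‖y‖)
    have hε' : ε * ε⁻¹ = 1 := mul_inv_cancel₀ hε.ne'
    nlinarith [inv_pos.2 hε]
  nlinarith

theorem norm_add₃_sq_le (x y z : E) :
    ‖x + y + z‖ ^ 2 ≤ 3 * (‖x‖ ^ 2 + ‖y‖ ^ 2 + ‖z‖ ^ 2) := by
  have h := norm_add₃_le (a := x) (b := y) (c := z)
  have hsq : ‖x + y + z‖ ^ 2 ≤ (‖x‖ + ‖y‖ + ‖z‖) ^ 2 := by gcongr
  nlinarith [sq_nonneg (‖x‖ - ‖y‖), sq_nonneg (‖y‖ - ‖z‖), sq_nonneg (‖x‖ - ‖z‖)]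

variable {F : Type*} [SeminormedAddCommGroup F]

theorem norm_sq_le_of_lipschitz_of_dev {u v : E → F} {L σ : ℝ}
    (hu : ∀ x y, ‖u x - u y‖ ≤ L * ‖x - y‖) {y : E} (hdev : ‖u y - v y‖ ^ 2 ≤ σ ^ 2) (x : E) :
    ‖u x‖ ^ 2 ≤ 3 * L ^ 2 * ‖x - y‖ ^ 2 + 3 * σ ^ 2 + 3 * ‖v y‖ ^ 2 := by
  have hlip : ‖u x - u y‖ ^ 2 ≤ L ^ 2 * ‖x - y‖ ^ 2 := by
    rw [← mul_pow]; gcongr; exact hu x y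
  calc ‖u x‖ ^ 2 = ‖(u x - u y) + (u y - v y) + v y‖ ^ 2 := by abel_nf
    _ ≤ 3 * (‖u x - u y‖ ^ 2 + ‖u y - v y‖ ^ 2 + ‖v y‖ ^ 2) := norm_add₃_sq_le _ _ _
    _ ≤ _ := by linarith

theorem norm_sub_smul_sq_le_of_lipschitz [NormedSpace ℝ E] {u v : E → E} {L σ K ζ c : ℝ}
    (hu : ∀ x y, ‖u x - u y‖ ≤ L * ‖x - y‖) {y : E} (hdev : ‖u y - v y‖ ^ 2 ≤ σ ^ 2) (hK : 1 < 2 * K)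
    (hstep : 1 / (2 * K - 1) + 6 * K * ζ ^ 2 * L ^ 2 ≤ c) (x : E) :
    ‖(x - y) - ζ • u x‖ ^ 2
      ≤ (1 + c) * ‖x - y‖ ^ 2 + 6 * K * ζ ^ 2 * σ ^ 2 + 6 * K * ζ ^ 2 * ‖v y‖ ^ 2 := by
  have hε : 0 < (2 * K - 1)⁻¹ := inv_pos.2 (by linarith)
  have hyoung := norm_sub_sq_le_one_add_mul hε (x - y) (ζ • u x)
  rw [inv_inv, norm_smul, mul_pow, Real.norm_eq_abs, sq_abs] at hyoung
  rw [one_div] at hstep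
  calc ‖(x - y) - ζ • u x‖ ^ 2
      ≤ (1 + (2 * K - 1)⁻¹) * ‖x - y‖ ^ 2 + 2 * K * ζ ^ 2 * ‖u x‖ ^ 2 := by linarith
    _ ≤ (1 + (2 * K - 1)⁻¹) * ‖x - y‖ ^ 2
        + 2 * K * ζ ^ 2 * (3 * L ^ 2 * ‖x - y‖ ^ 2 + 3 * σ ^ 2 + 3 * ‖v y‖ ^ 2) := by
      gcongr; exact norm_sq_le_of_lipschitz_of_dev hu hdev x
    _ = (1 + ((2 * K - 1)⁻¹ + 6 * K * ζ ^ 2 * L ^ 2)) * ‖x - y‖ ^ 2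
        + 6 * K * ζ ^ 2 * σ ^ 2 + 6 * K * ζ ^ 2 * ‖v y‖ ^ 2 := by ring
    _ ≤ (1 + c) * ‖x - y‖ ^ 2 + 6 * K * ζ ^ 2 * σ ^ 2 + 6 * K * ζ ^ 2 * ‖v y‖ ^ 2 := by
      gcongr

end NormInequalities

section ConditionalExpectation

variable {Ω : Type*} {m m0 : MeasurableSpace Ω} {μ : Measure Ω}

theorem integral_le_of_condExp_le [IsProbabilityMeasure μ] (hm : m ≤ m0) {h : Ω → ℝ} {c : ℝ}
    (hh : μ[h | m] ≤ᵐ[μ] fun _ => c) : ∫ ω, h ω ∂μ ≤ c := by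
  rw [← integral_condExp hm]
  simpa using integral_mono_ae integrable_condExp (integrable_const c) hh

theorem integral_le_mul_integral_add_of_le [IsProbabilityMeasure μ] {u v : Ω → ℝ} {a b : ℝ}
    (hu : 0 ≤ᵐ[μ] u) (hv : Integrable v μ) (h : ∀ ω, u ω ≤ a * v ω + b) :
    ∫ ω, u ω ∂μ ≤ a * ∫ ω, v ω ∂μ + b := by
  calc ∫ ω, u ω ∂μ ≤ ∫ ω, a * v ω + b ∂μ :=
        integral_mono_of_nonneg hu ((hv.const_mul a).add (integrable_const b)) (ae_of_all _ h)
    _ = a * ∫ ω, v ω ∂μ + b := by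
      rw [integral_add (hv.const_mul a) (integrable_const b), integral_const_mul]
      simp

theorem memLp_two_of_sq_norm_le {E : Type*} [NormedAddCommGroup E] {G : Ω → E} {a : Ω → ℝ}
    (hG : AEStronglyMeasurable G μ) (ha : Integrable a μ) (h : ∀ᵐ ω ∂μ, ‖G ω‖ ^ 2 ≤ a ω) :
    MemLp G 2 μ := by
  refine (memLp_two_iff_integrable_sq_norm hG).2 (ha.mono' (hG.norm.pow 2) ?_)
  filter_upwards [h] with ω hω
  rwa [Real.norm_of_nonneg (by positivity)]

variable {V : Type*} [NormedAddCommGroup V] [InnerProductSpace ℝ V] [CompleteSpace V]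
  [IsFiniteMeasure μ]

theorem condExp_sub_ae_eq_zero_of_ae_eq (hm : m ≤ m0) {g G : Ω → V} (hg : Integrable g μ)
    (hG : Integrable G μ) (hGm : StronglyMeasurable[m] G) (h : μ[g | m] =ᵐ[μ] G) :
    μ[g - G | m] =ᵐ[μ] 0 := by
  refine (condExp_sub hg hG m).trans ?_
  rw [condExp_of_stronglyMeasurable hm hGm hG]
  filter_upwards [h] with ω hω
  simp [hω]

theorem integral_inner_eq_zero_of_condExp_ae_eq_zero (hm : m ≤ m0) {X D : Ω → V}
    (hX : StronglyMeasurable[m] X) (hXD : Integrable (fun ω => ⟪X ω, D ω⟫) μ)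
    (hD : Integrable D μ) (hD0 : μ[D | m] =ᵐ[μ] 0) :
    ∫ ω, ⟪X ω, D ω⟫ ∂μ = 0 := by
  rw [← integral_condExp hm]
  refine integral_eq_zero_of_ae ?_
  filter_upwards [condExp_bilin_of_stronglyMeasurable_left (innerSL ℝ) hX hXD hD, hD0]
    with ω hpull hzero
  calc _ = innerSL ℝ (X ω) (μ[D | m] ω) := hpull
    _ = 0 := by simp [hzero]

theorem integral_norm_sub_smul_sq_of_condExp_ae_eq_zero (hm : m ≤ m0) {X D : Ω → V}
    (hX : MemLp X 2 μ) (hXm : StronglyMeasurable[m] X) (hD : MemLp D 2 μ)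
    (hD0 : μ[D | m] =ᵐ[μ] 0) (c : ℝ) :
    ∫ ω, ‖X ω - c • D ω‖ ^ 2 ∂μ = ∫ ω, ‖X ω‖ ^ 2 ∂μ + c ^ 2 * ∫ ω, ‖D ω‖ ^ 2 ∂μ := by
  have hXD : Integrable (fun ω => ⟪X ω, D ω⟫) μ :=
    memLp_one_iff_integrable.1 ((innerSL ℝ).memLp_of_bilin 1 hX hD)
  have hcross := integral_inner_eq_zero_of_condExp_ae_eq_zero hm hXm hXD
    (hD.integrable one_le_two) hD0
  have hexpand : ∀ ω, ‖X ω - c • D ω‖ ^ 2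
      = ‖X ω‖ ^ 2 - 2 * c * ⟪X ω, D ω⟫ + c ^ 2 * ‖D ω‖ ^ 2 := fun ω => by
    rw [norm_sub_sq_real, real_inner_smul_right, norm_smul, mul_pow, Real.norm_eq_abs, sq_abs]
    ring
  have hX2 : Integrable (fun ω => ‖X ω‖ ^ 2) μ := hX.norm.integrable_sq
  have hXD' : Integrable (fun ω => 2 * c * ⟪X ω, D ω⟫) μ := hXD.const_mul _
  have hD2 : Integrable (fun ω => c ^ 2 * ‖D ω‖ ^ 2) μ := hD.norm.integrable_sq.const_mul _
  have hdiff : Integrable (fun ω => ‖X ω‖ ^ 2 - 2 * c * ⟪X ω, D ω⟫) μ := hX2.sub hXD'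
  simp_rw [hexpand]
  rw [integral_add hdiff hD2, integral_sub hX2 hXD', integral_const_mul,
    integral_const_mul, hcross]
  ring

end ConditionalExpectation

theorem stmt7_general {V : Type*} [NormedAddCommGroup V] [InnerProductSpace ℝ V]
    [FiniteDimensional ℝ V] [MeasurableSpace V] [BorelSpace V]
    {Ω : Type*} {m0 : MeasurableSpace Ω} (μ : Measure Ω) [IsProbabilityMeasure μ]
    (N : ℕ) (f : Fin N → V → ℝ) (F : V → ℝ) (L σl σg : ℝ)
    (hLip : ∀ i, ∀ x y : V, ‖∇ (f i) x - ∇ (f i) y‖ ≤ L * ‖x - y‖)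
    (hdev : ∀ i, ∀ x : V, ‖∇ (f i) x - ∇ F x‖ ^ 2 ≤ σg ^ 2)
    (wt : V) (K : ℕ) (hK : 2 ≤ K) (ζ : ℝ)
    (hstep : 1 / (2 * (K : ℝ) - 1) + 6 * (K : ℝ) * ζ ^ 2 * L ^ 2 ≤ 1 / ((K : ℝ) - 1))
    (i : Fin N) (w g : Ω → V)
    (hwL2 : MemLp w 2 μ) (hgL2 : MemLp g 2 μ) (hw_meas : Measurable w)
    (hunbiased : μ[g | MeasurableSpace.comap w ‹MeasurableSpace V›]
      =ᵐ[μ] fun ω => ∇ (f i) (w ω))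
    (hvar : μ[(fun ω => ‖g ω - ∇ (f i) (w ω)‖ ^ 2) | MeasurableSpace.comap w ‹MeasurableSpace V›]
      ≤ᵐ[μ] fun _ => σl ^ 2) :
    ∫ ω, ‖(w ω - ζ • g ω) - wt‖ ^ 2 ∂μ
      ≤ (1 + 1 / ((K : ℝ) - 1)) * ∫ ω, ‖w ω - wt‖ ^ 2 ∂μ
        + ζ ^ 2 * σl ^ 2 + 6 * (K : ℝ) * ζ ^ 2 * σg ^ 2
        + 6 * (K : ℝ) * ζ ^ 2 * ‖∇ F wt‖ ^ 2 := by
  set m := MeasurableSpace.comap w ‹MeasurableSpace V›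
  have hm : m ≤ m0 := hw_meas.comap_le
  set G : Ω → V := fun ω => ∇ (f i) (w ω)
  have hGmeas : Measurable[m] G :=
    (LipschitzWith.of_dist_le' (f := ∇ (f i)) fun x y => by
      simpa only [dist_eq_norm] using hLip i x y).continuous.measurable.comp (comap_measurable w)
  have hGm : StronglyMeasurable[m] G := hGmeas.stronglyMeasurable
  have hw' : MemLp (fun ω => w ω - wt) 2 μ := hwL2.sub (memLp_const wt)
  have hGL2 : MemLp G 2 μ :=
    memLp_two_of_sq_norm_le (hGm.mono hm).aestronglyMeasurable
      (((hw'.norm.integrable_sq.const_mul _).add (integrable_const _)).add (integrable_const _))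
      (ae_of_all _ fun ω => norm_sq_le_of_lipschitz_of_dev (hLip i) (hdev i wt) (w ω))
  have hXm : StronglyMeasurable[m] (fun ω => (w ω - wt) - ζ • G ω) :=
    (((comap_measurable w).sub_const wt).sub (hGmeas.const_smul ζ)).stronglyMeasurable
  have hK' : (1 : ℝ) < 2 * K := by
    have : (2 : ℝ) ≤ K := by exact_mod_cast hK
    linarith
  calc ∫ ω, ‖(w ω - ζ • g ω) - wt‖ ^ 2 ∂μ
      = ∫ ω, ‖((w ω - wt) - ζ • G ω) - ζ • (g - G) ω‖ ^ 2 ∂μ := by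
        congr with ω
        simp only [Pi.sub_apply, smul_sub]
        abel_nf
    _ = ∫ ω, ‖(w ω - wt) - ζ • G ω‖ ^ 2 ∂μ + ζ ^ 2 * ∫ ω, ‖(g - G) ω‖ ^ 2 ∂μ :=
        integral_norm_sub_smul_sq_of_condExp_ae_eq_zero hm (hw'.sub (hGL2.const_smul ζ)) hXm
          (hgL2.sub hGL2) (condExp_sub_ae_eq_zero_of_ae_eq hm (hgL2.integrable one_le_two)
            (hGL2.integrable one_le_two) hGm hunbiased) ζ
    _ ≤ ((1 + 1 / ((K : ℝ) - 1)) * ∫ ω, ‖w ω - wt‖ ^ 2 ∂μ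
          + (6 * K * ζ ^ 2 * σg ^ 2 + 6 * K * ζ ^ 2 * ‖∇ F wt‖ ^ 2)) + ζ ^ 2 * σl ^ 2 := by
        gcongr
        · refine integral_le_mul_integral_add_of_le (ae_of_all _ fun ω => by positivity)
            hw'.norm.integrable_sq fun ω => ?_
          have := norm_sub_smul_sq_le_of_lipschitz (hLip i) (hdev i wt) hK' hstep (w ω)
          linarith
        · exact integral_le_of_condExp_le hm hvar
    _ = _ := by ring

/-- One-step local drift bound (Eq. (23) of the paper): one local SGD step of client `i`
drifts from the anchor `w_t` by at most
`(1 + 1/(K−1)) E‖w − w_t‖² + ζ²σ_l² + 6Kζ²σ_g² + 6Kζ²‖∇f(w_t)‖²`,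
where the stochastic gradient `g` is conditionally unbiased, given the σ-algebra generated
by the current iterate `w`, with conditional variance at most `σ_l²`. -/
theorem stmt7 {V : Type*} [NormedAddCommGroup V] [InnerProductSpace ℝ V]
    [FiniteDimensional ℝ V] [MeasurableSpace V] [BorelSpace V]
    {Ω : Type*} {m0 : MeasurableSpace Ω} (μ : Measure Ω) [IsProbabilityMeasure μ]
    (N : ℕ) (f : Fin N → V → ℝ) (F : V → ℝ) (L σl σg : ℝ)
    (hdiff : ∀ i, Differentiable ℝ (f i))
    (hLip : ∀ i, ∀ x y : V, ‖∇ (f i) x - ∇ (f i) y‖ ≤ L * ‖x - y‖)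
    (hF : F = fun x => (1 / (N : ℝ)) * ∑ i : Fin N, f i x)
    (hdev : ∀ i, ∀ x : V, ‖∇ (f i) x - ∇ F x‖ ^ 2 ≤ σg ^ 2)
    (wt : V) (K : ℕ) (hK : 2 ≤ K) (ζ : ℝ) (hζ : 0 < ζ)
    (hstep : 1 / (2 * (K : ℝ) - 1) + 6 * (K : ℝ) * ζ ^ 2 * L ^ 2 ≤ 1 / ((K : ℝ) - 1))
    (i : Fin N) (w g : Ω → V)
    (hwL2 : MemLp w 2 μ) (hgL2 : MemLp g 2 μ) (hw_meas : Measurable w)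
    (hunbiased : μ[g | MeasurableSpace.comap w ‹MeasurableSpace V›]
      =ᵐ[μ] fun ω => ∇ (f i) (w ω))
    (hvar : μ[(fun ω => ‖g ω - ∇ (f i) (w ω)‖ ^ 2) | MeasurableSpace.comap w ‹MeasurableSpace V›]
      ≤ᵐ[μ] fun _ => σl ^ 2) :
    ∫ ω, ‖(w ω - ζ • g ω) - wt‖ ^ 2 ∂μ
      ≤ (1 + 1 / ((K : ℝ) - 1)) * ∫ ω, ‖w ω - wt‖ ^ 2 ∂μ
        + ζ ^ 2 * σl ^ 2 + 6 * (K : ℝ) * ζ ^ 2 * σg ^ 2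
        + 6 * (K : ℝ) * ζ ^ 2 * ‖∇ F wt‖ ^ 2 :=
  stmt7_general (m0 := m0) μ N f F L σl σg hLip hdev wt K hK ζ hstep i w g hwL2 hgL2 hw_meas
    hunbiased hvar
end

section
/- (Server drift accumulation bound, Eq. (35) of the paper.) Let E be a finite-dimensional real inner product space and f : E → ℝ differentiable. On a probability space with a filtration (F_e)_{e≥0}, let ŵ_0 be F_0-measurable and square-integrable, and for e ≥ 0 define ŵ_{e+1} = ŵ_e − η h_e, where η > 0 and each h_e is a square-integrable E-valued random vector satisfying E[h_e | F_e] = ∇f(ŵ_e) and E[‖h_e − ∇f(ŵ_e)‖² | F_e] ≤ σ_l², with ŵ_e being F_e-measurable. Then for every integer e ≥ 0, E‖ŵ_0 − ŵ_e‖² ≤ η² e Σ_{p=0}^{e−1} E‖∇f(ŵ_p)‖² + η² e² σ_l². -/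
/-!
Telescoping and Cauchy–Schwarz give `‖W₀ - Wₑ‖² ≤ η² e ∑_{p<e} ‖h_p‖²` pointwise. In `L²`,
each `h_p` splits orthogonally into its conditional mean `∇f(W_p)` and a noise term, so
`E‖h_p‖² = E‖∇f(W_p)‖² + E‖h_p - ∇f(W_p)‖² ≤ E‖∇f(W_p)‖² + σ_l²`.
-/

open MeasureTheory
open scoped Gradient RealInnerProductSpace

lemma norm_sub_sq_le_mul_sum_norm_sub_sq {E : Type*} [SeminormedAddCommGroup E]
    (x : ℕ → E) (e : ℕ) :
    ‖x 0 - x e‖ ^ 2 ≤ e * ∑ p ∈ Finset.range e, ‖x p - x (p + 1)‖ ^ 2 := by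
  rw [← Finset.sum_range_sub']
  calc ‖∑ p ∈ Finset.range e, (x p - x (p + 1))‖ ^ 2
      ≤ (∑ p ∈ Finset.range e, ‖x p - x (p + 1)‖) ^ 2 := by gcongr; exact norm_sum_le _ _
    _ ≤ _ := by
        simpa using
          sq_sum_le_card_mul_sum_sq (s := Finset.range e) (f := fun p => ‖x p - x (p + 1)‖)

namespace MeasureTheory

variable {V : Type*} [NormedAddCommGroup V] [InnerProductSpace ℝ V] [CompleteSpace V]
  {Ω : Type*} {m m0 : MeasurableSpace Ω} {μ : Measure Ω}

lemma integral_le_of_condExp_le_const [IsProbabilityMeasure μ] (hm : m ≤ m0) {φ : Ω → ℝ}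
    {c : ℝ} (hφ : μ[φ | m] ≤ᵐ[μ] fun _ => c) : ∫ ω, φ ω ∂μ ≤ c := by
  rw [← integral_condExp hm]
  simpa using integral_mono_ae integrable_condExp (integrable_const c) hφ

lemma MemLp.integral_inner_condExp [IsFiniteMeasure μ] (hm : m ≤ m0) {h : Ω → V}
    (hh : MemLp h 2 μ) :
    ∫ ω, ⟪h ω, μ[h | m] ω⟫ ∂μ = ∫ ω, ‖μ[h | m] ω‖ ^ 2 ∂μ := by
  set P := (condExpL2 V ℝ hm (hh.toLp h) : Ω →₂[μ] V)
  have hP : P =ᵐ[μ] μ[h | m] := hh.condExpL2_ae_eq_condExp hm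
  -- `P` is the orthogonal projection of `h` onto the `m`-measurable subspace of `L²`.
  have hproj : ⟪P, P⟫ = ⟪hh.toLp h, P⟫ :=
    inner_condExpL2_eq_inner_fun hm _ _ (aestronglyMeasurable_condExpL2 hm _)
  rw [L2.inner_def, L2.inner_def] at hproj
  calc ∫ ω, ⟪h ω, μ[h | m] ω⟫ ∂μ = ∫ ω, ⟪hh.toLp h ω, P ω⟫ ∂μ :=
        integral_congr_ae <| by
          filter_upwards [hh.coeFn_toLp, hP] with ω h₁ h₂
          rw [h₁, h₂]
    _ = ∫ ω, ⟪P ω, P ω⟫ ∂μ := hproj.symm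
    _ = ∫ ω, ‖μ[h | m] ω‖ ^ 2 ∂μ :=
        integral_congr_ae <| by
          filter_upwards [hP] with ω hω
          rw [hω, real_inner_self_eq_norm_sq]

lemma MemLp.integral_norm_sq_eq_condExp_add [IsFiniteMeasure μ] (hm : m ≤ m0) {h : Ω → V}
    (hh : MemLp h 2 μ) :
    ∫ ω, ‖h ω‖ ^ 2 ∂μ
      = ∫ ω, ‖μ[h | m] ω‖ ^ 2 ∂μ + ∫ ω, ‖h ω - μ[h | m] ω‖ ^ 2 ∂μ := by
  have hc : MemLp (μ[h | m]) 2 μ := hh.condExp one_le_two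
  have hinner : Integrable (fun ω => ⟪h ω, μ[h | m] ω⟫) μ :=
    (L2.integrable_inner (𝕜 := ℝ) (hh.toLp h) (hc.toLp _)).congr <| by
      filter_upwards [hh.coeFn_toLp, hc.coeFn_toLp] with ω h₁ h₂
      rw [h₁, h₂]
  have hexpand : ∫ ω, ‖h ω - μ[h | m] ω‖ ^ 2 ∂μ
      = ∫ ω, ‖h ω‖ ^ 2 ∂μ - 2 * ∫ ω, ⟪h ω, μ[h | m] ω⟫ ∂μ
        + ∫ ω, ‖μ[h | m] ω‖ ^ 2 ∂μ := by
    have hsub : Integrable (fun ω => ‖h ω‖ ^ 2 - 2 * ⟪h ω, μ[h | m] ω⟫) μ :=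
      hh.norm.integrable_sq.sub (hinner.const_mul 2)
    simp_rw [norm_sub_sq_real]
    rw [integral_add hsub hc.norm.integrable_sq,
      integral_sub hh.norm.integrable_sq (hinner.const_mul 2), integral_const_mul]
  rw [hexpand, hh.integral_inner_condExp hm]
  ring

lemma MemLp.integral_norm_sq_le_of_condExp [IsProbabilityMeasure μ] (hm : m ≤ m0)
    {h g : Ω → V} (hh : MemLp h 2 μ) (hg : μ[h | m] =ᵐ[μ] g) {c : ℝ}
    (hnoise : μ[fun ω => ‖h ω - g ω‖ ^ 2 | m] ≤ᵐ[μ] fun _ => c) :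
    ∫ ω, ‖h ω‖ ^ 2 ∂μ ≤ ∫ ω, ‖g ω‖ ^ 2 ∂μ + c := by
  have hmean : ∫ ω, ‖μ[h | m] ω‖ ^ 2 ∂μ = ∫ ω, ‖g ω‖ ^ 2 ∂μ :=
    integral_congr_ae (hg.mono fun ω hω => by simp only [hω])
  have hdev : ∫ ω, ‖h ω - μ[h | m] ω‖ ^ 2 ∂μ = ∫ ω, ‖h ω - g ω‖ ^ 2 ∂μ :=
    integral_congr_ae (hg.mono fun ω hω => by simp only [hω])
  rw [hh.integral_norm_sq_eq_condExp_add hm, hmean, hdev]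
  exact add_le_add_right (integral_le_of_condExp_le_const hm hnoise) _

end MeasureTheory

theorem stmt8_general {V : Type*} [NormedAddCommGroup V] [InnerProductSpace ℝ V]
    [FiniteDimensional ℝ V]
    {Ω : Type*} {m0 : MeasurableSpace Ω} (μ : Measure Ω) [IsProbabilityMeasure μ]
    (f : V → ℝ) (σl η : ℝ)
    (ℱ : Filtration ℕ m0)
    (W h : ℕ → Ω → V)
    (hhL2 : ∀ e, MemLp (h e) 2 μ)
    (hrec : ∀ e, W (e + 1) = fun ω => W e ω - η • h e ω)
    (hunbiased : ∀ e, μ[h e | ℱ e] =ᵐ[μ] fun ω => ∇ f (W e ω))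
    (hvar : ∀ e, μ[(fun ω => ‖h e ω - ∇ f (W e ω)‖ ^ 2) | ℱ e] ≤ᵐ[μ] fun _ => σl ^ 2) :
    ∀ e : ℕ,
      ∫ ω, ‖W 0 ω - W e ω‖ ^ 2 ∂μ
        ≤ η ^ 2 * (e : ℝ) * ∑ p ∈ Finset.range e, ∫ ω, ‖∇ f (W p ω)‖ ^ 2 ∂μ
          + η ^ 2 * (e : ℝ) ^ 2 * σl ^ 2 := by
  intro e
  have hstep (p : ℕ) :
      ∫ ω, ‖h p ω‖ ^ 2 ∂μ ≤ ∫ ω, ‖∇ f (W p ω)‖ ^ 2 ∂μ + σl ^ 2 :=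
    (hhL2 p).integral_norm_sq_le_of_condExp (ℱ.le p) (hunbiased p) (hvar p)
  have hdrift (ω : Ω) :
      ‖W 0 ω - W e ω‖ ^ 2 ≤ η ^ 2 * e * ∑ p ∈ Finset.range e, ‖h p ω‖ ^ 2 := by
    have := norm_sub_sq_le_mul_sum_norm_sub_sq (W · ω) e
    simp only [hrec, sub_sub_cancel, norm_smul, mul_pow, Real.norm_eq_abs, sq_abs,
      ← Finset.mul_sum] at this
    linarith
  have hint (p : ℕ) : Integrable (fun ω => ‖h p ω‖ ^ 2) μ := (hhL2 p).norm.integrable_sq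
  calc ∫ ω, ‖W 0 ω - W e ω‖ ^ 2 ∂μ
      ≤ ∫ ω, η ^ 2 * e * ∑ p ∈ Finset.range e, ‖h p ω‖ ^ 2 ∂μ :=
        integral_mono_of_nonneg (.of_forall fun _ => sq_nonneg _)
          ((integrable_finsetSum _ fun p _ => hint p).const_mul _) (.of_forall hdrift)
    _ = η ^ 2 * e * ∑ p ∈ Finset.range e, ∫ ω, ‖h p ω‖ ^ 2 ∂μ := by
        rw [integral_const_mul, integral_finsetSum _ fun p _ => hint p]
    _ ≤ η ^ 2 * e * ∑ p ∈ Finset.range e, (∫ ω, ‖∇ f (W p ω)‖ ^ 2 ∂μ + σl ^ 2) := by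
        gcongr with p; exact hstep p
    _ = _ := by
        rw [Finset.sum_add_distrib, Finset.sum_const, Finset.card_range, nsmul_eq_mul]
        ring

/-- Server drift accumulation bound (Eq. (35) of the paper): for the server-side SGD
iterates `W_{e+1} = W_e − η h_e` driven by stochastic gradients that are conditionally
unbiased for `∇f` with conditional noise second moment at most `σ_l²`,
`E‖W_0 − W_e‖² ≤ η² e Σ_{p<e} E‖∇f(W_p)‖² + η² e² σ_l²`. -/
theorem stmt8 {V : Type*} [NormedAddCommGroup V] [InnerProductSpace ℝ V]
    [FiniteDimensional ℝ V]
    {Ω : Type*} {m0 : MeasurableSpace Ω} (μ : Measure Ω) [IsProbabilityMeasure μ]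
    (f : V → ℝ) (hdiff : Differentiable ℝ f) (σl η : ℝ) (hη : 0 < η)
    (ℱ : Filtration ℕ m0)
    (W h : ℕ → Ω → V)
    (hmeas : ∀ e, StronglyMeasurable[ℱ e] (W e))
    (hWL2 : ∀ e, MemLp (W e) 2 μ) (hhL2 : ∀ e, MemLp (h e) 2 μ)
    (hrec : ∀ e, W (e + 1) = fun ω => W e ω - η • h e ω)
    (hunbiased : ∀ e, μ[h e | ℱ e] =ᵐ[μ] fun ω => ∇ f (W e ω))
    (hvar : ∀ e, μ[(fun ω => ‖h e ω - ∇ f (W e ω)‖ ^ 2) | ℱ e] ≤ᵐ[μ] fun _ => σl ^ 2) :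
    ∀ e : ℕ,
      ∫ ω, ‖W 0 ω - W e ω‖ ^ 2 ∂μ
        ≤ η ^ 2 * (e : ℝ) * ∑ p ∈ Finset.range e, ∫ ω, ‖∇ f (W p ω)‖ ^ 2 ∂μ
          + η ^ 2 * (e : ℝ) ^ 2 * σl ^ 2 :=
  stmt8_general μ f σl η ℱ W h hhL2 hrec hunbiased hvar
end
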